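/- arXiv:1712.09691 — 5 statements merged into one kernel-verified Lean document; each statement's English description precedes it below -/
import Mathlib

section
/- Consider a finite directed graph on positive-integer-labelled nodes represented as a finite set of edges (pairs (e_i, e_j) with e_i < e_j). The replacement operation that takes all parents e_1 < e_2 < ... < e_i of a node e_j (when i ≥ 2) and replaces edges (e_1,e_j),...,(e_i,e_j) by (e*,e_j),(e*,e_1),...,(e*,e_i) with e* = min(e_1,...,e_i), strictly decreases the sum of node identifiers over all edges (after removing duplicate edges and self-loops). Hence the iteration terminates. -/
lemma sum_union_le_nat {α : Type*} [DecidableEq α] (s t : Finset α) (f : α → ℕ) :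
    ∑ x ∈ s ∪ t, f x ≤ ∑ x ∈ s, f x + ∑ x ∈ t, f x := by
  have := Finset.sum_union_inter (s₁ := s) (s₂ := t) (f := f)
  omega

/-- The parent-replacement operation on a finite edge set (pairs (a,b) with 0 < a < b):
taking all parents P of a node j (with |P| ≥ 2) and replacing the edges (a,j), a ∈ P,
by (e*,j) and (e*,a) for a ∈ P, a ≠ e*, where e* = min P (with duplicates and
self-loops discarded by the set structure), strictly decreases the total sum of node
identifiers over all edges; hence the iteration terminates. -/
theorem stmt13 (E : Finset (ℕ × ℕ)) (hpos : ∀ p ∈ E, 0 < p.1 ∧ p.1 < p.2)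
    (j : ℕ) (P : Finset ℕ) (hP : P = (E.filter (fun p => p.2 = j)).image Prod.fst)
    (h2 : 2 ≤ P.card) (hne : P.Nonempty) (estar : ℕ) (hstar : estar = P.min' hne)
    (E' : Finset (ℕ × ℕ))
    (hE' : E' = (E.filter (fun p => p.2 ≠ j)) ∪ {(estar, j)} ∪
        (P.filter (fun a => a ≠ estar)).image (fun a => (estar, a))) :
    ∑ p ∈ E', (p.1 + p.2) < ∑ p ∈ E, (p.1 + p.2) := by
  have hstarP : estar ∈ P := hstar ▸ P.min'_mem hne
  -- estar < j
  have hej : estar < j := by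
    rw [hP] at hstarP
    obtain ⟨p, hp, hfst⟩ := Finset.mem_image.mp hstarP
    have h1 := (Finset.mem_filter.mp hp).2
    have h2' := (hpos p (Finset.mem_filter.mp hp).1).2
    omega
  -- sum over edges into j equals sum over P of (a + j)
  have hsumP : ∑ a ∈ P, (a + j) = ∑ p ∈ E.filter (fun p => p.2 = j), (p.1 + p.2) := by
    rw [hP, Finset.sum_image]
    · refine Finset.sum_congr rfl fun p hp => ?_
      rw [(Finset.mem_filter.mp hp).2]
    · intro p hp q hq h
      exact Prod.ext h (((Finset.mem_filter.mp hp).2).trans ((Finset.mem_filter.mp hq).2).symm)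
  have hsplitE : ∑ p ∈ E, (p.1 + p.2)
      = ∑ p ∈ E.filter (fun p => p.2 ≠ j), (p.1 + p.2) + ∑ a ∈ P, (a + j) := by
    rw [hsumP, add_comm]
    exact (Finset.sum_filter_add_sum_filter_not E (fun p => p.2 = j) _).symm
  -- bound the sum over E'
  have himg : ∑ p ∈ (P.filter (fun a => a ≠ estar)).image (fun a => (estar, a)),
      (p.1 + p.2) = ∑ a ∈ P.filter (fun a => a ≠ estar), (estar + a) := by
    rw [Finset.sum_image]
    intro a _ b _ h
    exact (Prod.mk.injEq _ _ _ _).mp h |>.2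
  have h1 : ∑ p ∈ E', (p.1 + p.2)
      ≤ ∑ p ∈ E.filter (fun p => p.2 ≠ j), (p.1 + p.2)
        + (estar + j) + ∑ a ∈ P.filter (fun a => a ≠ estar), (estar + a) := by
    rw [hE']
    calc ∑ p ∈ (E.filter (fun p => p.2 ≠ j) ∪ {(estar, j)} ∪
          (P.filter (fun a => a ≠ estar)).image (fun a => (estar, a))), (p.1 + p.2)
        ≤ ∑ p ∈ (E.filter (fun p => p.2 ≠ j) ∪ {(estar, j)}), (p.1 + p.2)
          + ∑ p ∈ (P.filter (fun a => a ≠ estar)).image (fun a => (estar, a)), (p.1 + p.2) :=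
          sum_union_le_nat _ _ _
      _ ≤ (∑ p ∈ E.filter (fun p => p.2 ≠ j), (p.1 + p.2)
            + ∑ p ∈ ({(estar, j)} : Finset (ℕ × ℕ)), (p.1 + p.2))
          + ∑ p ∈ (P.filter (fun a => a ≠ estar)).image (fun a => (estar, a)), (p.1 + p.2) :=
          Nat.add_le_add_right (sum_union_le_nat _ _ _) _
      _ = _ := by rw [Finset.sum_singleton, himg]
  -- the strict inequality on the P-part
  have herase : P.filter (fun a => a ≠ estar) = P.erase estar := Finset.filter_ne' P estar
  have hne' : (P.erase estar).Nonempty := by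
    rw [← Finset.card_pos, Finset.card_erase_of_mem hstarP]
    omega
  have hstrict : (estar + j) + ∑ a ∈ P.filter (fun a => a ≠ estar), (estar + a)
      < ∑ a ∈ P, (a + j) := by
    rw [herase, ← Finset.add_sum_erase P (fun a => a + j) hstarP]
    refine Nat.add_lt_add_left ?_ _
    exact Finset.sum_lt_sum_of_nonempty hne' fun a ha => by omega
  omega
end

section
/- The replacement operation (e_1,e_j),...,(e_i,e_j) ⇒ (e*,e_j),(e*,e_1),...,(e*,e_i) with e* = min(e_1,...,e_i) preserves the connected components of the underlying undirected graph: two nodes are connected before the replacement if and only if they are connected after. -/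
lemma eqvGen_mono' {α : Type*} {r s : α → α → Prop}
    (h : ∀ a b, r a b → Relation.EqvGen s a b) {x y : α}
    (hxy : Relation.EqvGen r x y) : Relation.EqvGen s x y := by
  induction hxy with
  | rel a b hab => exact h a b hab
  | refl a => exact Relation.EqvGen.refl a
  | symm a b _ ih => exact Relation.EqvGen.symm a b ih
  | trans a b c _ _ ih1 ih2 => exact Relation.EqvGen.trans a b c ih1 ih2

/-- The replacement operation (e_1,j),...,(e_i,j) ⇒ (e*,j),(e*,e_1),...,(e*,e_i),
with e* the minimum parent of j, preserves the connected components of the underlying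
undirected graph: two nodes are connected (reflexive-transitive-symmetric closure of
the edge relation) before the replacement iff they are connected after. -/
theorem stmt14 (E : Set (ℕ × ℕ)) (j : ℕ) (P : Set ℕ) (hP : P = {a | (a, j) ∈ E})
    (estar : ℕ) (hstar : estar ∈ P ∧ ∀ a ∈ P, estar ≤ a)
    (E' : Set (ℕ × ℕ))
    (hE' : E' = {p | p ∈ E ∧ p.2 ≠ j} ∪ {(estar, j)} ∪
        {p | ∃ a ∈ P, a ≠ estar ∧ p = (estar, a)}) :
    ∀ x y, Relation.EqvGen (fun a b => (a, b) ∈ E) x y ↔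
      Relation.EqvGen (fun a b => (a, b) ∈ E') x y := by
  have hsj : (estar, j) ∈ E' := by
    rw [hE']; left; right; rfl
  intro x y
  constructor
  · refine eqvGen_mono' (fun a b hab => ?_)
    by_cases hb : b = j
    · subst hb
      have haP : a ∈ P := by rw [hP]; exact hab
      by_cases ha : a = estar
      · subst ha; exact Relation.EqvGen.rel _ _ hsj
      · have h1 : (estar, a) ∈ E' := by
          rw [hE']; right; exact ⟨a, haP, ha, rfl⟩
        exact Relation.EqvGen.trans _ _ _
          (Relation.EqvGen.symm _ _ (Relation.EqvGen.rel _ _ h1))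
          (Relation.EqvGen.rel _ _ hsj)
    · refine Relation.EqvGen.rel _ _ ?_
      rw [hE']; left; left; exact ⟨hab, hb⟩
  · refine eqvGen_mono' (fun a b hab => ?_)
    rw [hE'] at hab
    rcases hab with (⟨h1, _⟩ | h1) | ⟨c, hcP, _, heq⟩
    · exact Relation.EqvGen.rel _ _ h1
    · cases h1
      exact Relation.EqvGen.rel _ _ (by rw [hP] at hstar; exact hstar.1)
    · cases heq
      refine Relation.EqvGen.trans _ j _ ?_ ?_
      · exact Relation.EqvGen.rel _ _ (by rw [hP] at hstar; exact hstar.1)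
      · exact Relation.EqvGen.symm _ _ (Relation.EqvGen.rel _ _ (by rw [hP] at hcP; exact hcP))
end

section
/- In a forest where each non-root node has a unique parent with smaller identifier, the path-halving operation replacing each pair (e_i,e_j),(e_j,e_k) by (e_i,e_j),(e_i,e_k) preserves connected components and, if the maximum tree height is h > 1, reduces the maximum height to ⌈h/2⌉; hence after ⌈log₂ h⌉ rounds every tree has height one. -/
/-- Path halving in a forest given by a parent function with `parent n ≤ n` (roots are
the fixed points): replacing each node's parent by its grandparent preserves connected
components, halves every node's depth (d' n = ⌈d n / 2⌉, so for maximum height h > 1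
the maximum height becomes ⌈h/2⌉), and hence after ⌈log₂ h⌉ rounds every tree has
height at most one. -/
theorem stmt15 (parent : ℕ → ℕ) (hpar : ∀ n, parent n ≤ n)
    (d d' : ℕ → ℕ)
    (hd : ∀ n, d n = if parent n = n then 0 else d (parent n) + 1)
    (hd' : ∀ n, d' n = if parent (parent n) = n then 0 else d' (parent (parent n)) + 1) :
    (∀ x y, Relation.EqvGen (fun a b => parent a = b) x y ↔
        Relation.EqvGen (fun a b => parent (parent a) = b) x y) ∧
    (∀ n, d' n = (d n + 1) / 2) ∧
    (∀ V : Finset ℕ, V.Nonempty → (∀ n ∈ V, parent n ∈ V) →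
        1 < V.sup d → V.sup d' = (V.sup d + 1) / 2) ∧
    (∀ h : ℕ, 0 < h → (fun m => (m + 1) / 2)^[Nat.clog 2 h] h ≤ 1) := by
  have hlt : ∀ n, parent n ≠ n → parent n < n := fun n h => lt_of_le_of_ne (hpar n) h
  have aux1 : ∀ a, Relation.EqvGen (fun a b => parent (parent a) = b) a (parent a) := by
    intro a
    induction a using Nat.strong_induction_on with
    | _ a ih =>
      by_cases h : parent a = a
      · rw [h]; exact Relation.EqvGen.refl a
      · have h1 : Relation.EqvGen (fun a b => parent (parent a) = b) a (parent (parent a)) :=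
          Relation.EqvGen.rel _ _ rfl
        have h2 := ih (parent a) (hlt a h)
        exact h1.trans _ _ _ (h2.symm _ _)
  have part1 : ∀ x y, Relation.EqvGen (fun a b => parent a = b) x y ↔
      Relation.EqvGen (fun a b => parent (parent a) = b) x y := by
    intro x y
    constructor
    · intro h
      induction h with
      | rel a b hab => rw [← hab]; exact aux1 a
      | refl a => exact Relation.EqvGen.refl a
      | symm a b _ ih => exact ih.symm _ _
      | trans a b c _ _ ih1 ih2 => exact ih1.trans _ _ _ ih2
    · intro h
      induction h with
      | rel a b hab =>
          have s1 : Relation.EqvGen (fun a b => parent a = b) a (parent a) :=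
            Relation.EqvGen.rel _ _ rfl
          have s2 : Relation.EqvGen (fun a b => parent a = b) (parent a) b :=
            Relation.EqvGen.rel _ _ hab
          exact s1.trans _ _ _ s2
      | refl a => exact Relation.EqvGen.refl a
      | symm a b _ ih => exact ih.symm _ _
      | trans a b c _ _ ih1 ih2 => exact ih1.trans _ _ _ ih2
  have part2 : ∀ n, d' n = (d n + 1) / 2 := by
    intro n
    induction n using Nat.strong_induction_on with
    | _ n ih =>
      by_cases h : parent n = n
      · rw [hd' n, hd n, if_pos h, if_pos (by rw [h, h])]
      · have hpn := hlt n h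
        have hppn : parent (parent n) ≤ parent n := hpar _
        have e1 : d' n = (d (parent (parent n)) + 1) / 2 + 1 := by
          rw [hd' n, if_neg (by omega), ih (parent (parent n)) (by omega)]
        have e2 : d n = d (parent n) + 1 := by rw [hd n, if_neg h]
        by_cases h2 : parent (parent n) = parent n
        · have e3 : d (parent n) = 0 := by rw [hd (parent n), if_pos h2]
          have e4 : d (parent (parent n)) = 0 := by rw [h2, e3]
          omega
        · have e3 : d (parent n) = d (parent (parent n)) + 1 := by
            rw [hd (parent n), if_neg h2]
          omega
  refine ⟨part1, part2, ?_, ?_⟩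
  · intro V hV _ _
    obtain ⟨m, hm, hmax⟩ := V.exists_mem_eq_sup hV d
    apply le_antisymm
    · apply Finset.sup_le
      intro n hn
      rw [part2]
      have := Finset.le_sup (f := d) hn
      omega
    · rw [hmax, ← part2]
      exact Finset.le_sup hm
  · intro h
    induction h using Nat.strong_induction_on with
    | _ h ih =>
      intro hh
      rcases le_or_gt h 1 with h1 | h1
      · rw [Nat.clog_of_right_le_one h1]
        simpa using h1
      · have hc : Nat.clog 2 h = Nat.clog 2 ((h + 1) / 2) + 1 :=
          Nat.clog_of_two_le (by norm_num) h1
        rw [hc, Function.iterate_succ_apply]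
        have := ih ((h + 1) / 2) (by omega) (by omega)
        simpa using this
end

section
/- If every record in a finite set O possesses at least one ⊑-signature, and we link two records whenever they share a common ⊑-signature, then every equivalence class of the transitive closure of this linkage relation consists of records of a single entity, assuming each record belongs to exactly one entity. -/
/-- If every record of a finite set O possesses a ⊑-signature and records are linked
whenever they share a common ⊑-signature, then every equivalence class of the
(reflexive-)transitive closure of the linkage relation consists of records of a single
entity, assuming each record of O belongs to exactly one entity. -/
theorem stmt17 {W E : Type*} (D : Set (E × List W)) (O : Set (List W)) (hfin : O.Finite)
    (ent : List W → E) (hent : ∀ r ∈ O, ∀ e : E, (e, r) ∈ D ↔ e = ent r)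
    (sub : List W → List W → Prop)
    (hsub : ∀ s r, sub s r ↔ ∃ o ∈ O, List.Sublist s r ∧ List.Sublist r o)
    (sig : List W → E → Prop)
    (hsig : ∀ s e, sig s e ↔
        ((∃ r, sub s r ∧ (e, r) ∈ D) ∧ ∀ f r, (f, r) ∈ D → sub s r → f = e))
    (linked : List W → List W → Prop)
    (hlinked : ∀ r t, linked r t ↔
        (r ∈ O ∧ t ∈ O ∧ ∃ s e, sig s e ∧ sub s r ∧ sub s t))
    (hcover : ∀ r ∈ O, ∃ s e, sig s e ∧ sub s r) :
    ∀ r t, r ∈ O → Relation.ReflTransGen linked r t → ent r = ent t := by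
  intro r t _ h
  induction h with
  | refl => rfl
  | tail _ hbc ih =>
    rename_i b c _
    rw [hlinked] at hbc
    obtain ⟨hb, hc, s, e, hse, hsb, hsc⟩ := hbc
    obtain ⟨_, huniq⟩ := (hsig s e).mp hse
    have h1 : ent b = e := huniq _ _ ((hent b hb (ent b)).mpr rfl) hsb
    have h2 : ent c = e := huniq _ _ ((hent c hc (ent c)).mpr rfl) hsc
    rw [ih, h1, h2]
end

section
/- Let O be a set of observations and let s and ŝ be records with s ⪯ ŝ, where ŝ is a subrecord of some observation in O. If s is a ⊑-signature of an entity e (restricted to observations O), then ŝ is also a ⊑-signature of e. -/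
/-- If s is a ⊑-signature of e, s ⪯ ŝ, and ŝ is a subrecord of some observation,
then ŝ is also a ⊑-signature of e (justifying the Elimination step). -/
theorem stmt18 {W E : Type*} (D : Set (E × List W)) (O : Set (List W))
    (hO : ∀ o ∈ O, ∃ f : E, (f, o) ∈ D)
    (sub : List W → List W → Prop)
    (hsub : ∀ s r, sub s r ↔ ∃ o ∈ O, List.Sublist s r ∧ List.Sublist r o)
    (s shat : List W) (e : E)
    (hsig : (∃ r, sub s r ∧ (e, r) ∈ D) ∧ ∀ f r, (f, r) ∈ D → sub s r → f = e)
    (hss : List.Sublist s shat) (hobs : ∃ o ∈ O, List.Sublist shat o) :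
    (∃ r, sub shat r ∧ (e, r) ∈ D) ∧ ∀ f r, (f, r) ∈ D → sub shat r → f = e := by
  obtain ⟨o, ho, hso⟩ := hobs
  obtain ⟨f, hf⟩ := hO o ho
  have hfe : f = e := hsig.2 f o hf ((hsub s o).mpr ⟨o, ho, hss.trans hso, List.Sublist.refl o⟩)
  constructor
  · exact ⟨o, (hsub shat o).mpr ⟨o, ho, hso, List.Sublist.refl o⟩, hfe ▸ hf⟩
  · intro g r hg hr
    obtain ⟨o', ho', h1, h2⟩ := (hsub shat r).mp hr
    exact hsig.2 g r hg ((hsub s r).mpr ⟨o', ho', hss.trans h1, h2⟩)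
end
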